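/- Let F₁, F₂ be fusion systems over finite p-groups S₁, S₂, and (P,ψ) an (S₁,S₂)-pair. Let A_{⪯[P,ψ]} ⊆ A(S₁,S₂)^∧_p be the ℤ_p-submodule spanned by basis elements [Q,ρ] that are (F₁,F₂)-subconjugate to [P,ψ]. Then A_{⪯[P,ψ]} is closed under left multiplication by A_{F₂}(S₂,S₂)^∧_p and right multiplication by A_{F₁}(S₁,S₁)^∧_p: R_{F₂} ∘ A_{⪯[P,ψ]} ⊆ A_{⪯[P,ψ]} and A_{⪯[P,ψ]} ∘ R_{F₁} ⊆ A_{⪯[P,ψ]}. The same holds for the submodule spanned by pairs strictly subconjugate to [P,ψ]. -/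

import Mathlib

/-- A `(G₁,G₂)`-pair: a subgroup `H ≤ G₁` with a homomorphism `ψ : H → G₂`. -/
structure GPair (G₁ G₂ : Type*) [Group G₁] [Group G₂] where
  H : Subgroup G₁
  ψ : ↥H →* G₂

variable {G₁ G₂ G₃ : Type*} [Group G₁] [Group G₂] [Group G₃]

/-- `(G₁,G₂)`-conjugacy of pairs. -/
def gpairConj (a b : GPair G₁ G₂) : Prop :=
  ∃ (g : G₁) (h : G₂), a.H.map (MulAut.conj g).toMonoidHom = b.H ∧
    ∀ (x : G₁) (hx : x ∈ a.H) (hx' : g * x * g⁻¹ ∈ b.H),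
      b.ψ ⟨g * x * g⁻¹, hx'⟩ = h * a.ψ ⟨x, hx⟩ * h⁻¹

/-- The Burnside module `A(G₁,G₂)` with coefficients in `R`: the free `R`-module on the
conjugacy classes of `(G₁,G₂)`-pairs, an element being recorded by its coordinates. -/
def BurnsideMod (R : Type*) (G₁ G₂ : Type*) [Group G₁] [Group G₂] : Type _ :=
  Quot (gpairConj (G₁ := G₁) (G₂ := G₂)) → R

instance (R : Type*) [AddCommMonoid R] : AddCommMonoid (BurnsideMod R G₁ G₂) :=
  Pi.addCommMonoid

instance (R : Type*) [Semiring R] : Module R (BurnsideMod R G₁ G₂) :=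
  Pi.module _ _ _

open Classical in
/-- The basis element of the Burnside module corresponding to a pair. -/
noncomputable def gdelta {R : Type*} [Zero R] [One R] (a : GPair G₁ G₂) :
    BurnsideMod R G₁ G₂ :=
  fun q => if q = Quot.mk _ a then 1 else 0

/-- The subgroup `ψ⁻¹(ψ(H) ∩ K^x) ≤ G₁` appearing in the double coset formula, for
`a = (K,ρ)`, `b = (H,ψ)` and `x ∈ G₂`. -/
def dcfSub (a : GPair G₂ G₃) (b : GPair G₁ G₂) (x : G₂) : Subgroup G₁ :=
  Subgroup.map b.H.subtype
    (Subgroup.comap b.ψ (Subgroup.comap (MulAut.conj x).toMonoidHom a.H))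

lemma dcfSub_le (a : GPair G₂ G₃) (b : GPair G₁ G₂) (x : G₂) : dcfSub a b x ≤ b.H :=
  Subgroup.map_subtype_le _

lemma dcf_mem (a : GPair G₂ G₃) (b : GPair G₁ G₂) (x : G₂) (u : ↥(dcfSub a b x)) :
    ((MulAut.conj x).toMonoidHom.comp
        (b.ψ.comp (Subgroup.inclusion (dcfSub_le a b x)))) u ∈ a.H := by
  obtain ⟨w, hw, hwu⟩ := u.2
  have h1 : Subgroup.inclusion (dcfSub_le a b x) u = w := by
    apply Subtype.ext
    simpa using hwu.symm
  simp only [MonoidHom.comp_apply, h1]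
  simpa [Subgroup.mem_comap] using hw

/-- The summand `[ψ⁻¹(ψ(H) ∩ K^x), ρ ∘ c_x ∘ ψ]` of the double coset formula. -/
def dcfPair (a : GPair G₂ G₃) (b : GPair G₁ G₂) (x : G₂) : GPair G₁ G₃ where
  H := dcfSub a b x
  ψ := a.ψ.comp
    (MonoidHom.codRestrict
      ((MulAut.conj x).toMonoidHom.comp (b.ψ.comp (Subgroup.inclusion (dcfSub_le a b x))))
      a.H (dcf_mem a b x))

/-- `T` is a transversal of the double cosets `K\G₂/ψ(H)`, for `a = (K,ρ)`, `b = (H,ψ)`. -/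
def IsTransversal (a : GPair G₂ G₃) (b : GPair G₁ G₂) (T : Finset G₂) : Prop :=
  ∀ y : G₂, ∃! x, x ∈ T ∧ ∃ k ∈ a.H, ∃ v ∈ b.ψ.range, y = k * x * v

/-- The bilinear pairing `c` is the composition pairing of Burnside modules: on basis
elements it is given by the double coset formula
`[K,ρ] ∘ [H,ψ] = Σ_{x ∈ K\G₂/ψ(H)} [ψ⁻¹(ψ(H) ∩ K^x), ρ ∘ c_x ∘ ψ]`. -/
def DCFLaw {R : Type*} [CommSemiring R]
    (c : BurnsideMod R G₂ G₃ →ₗ[R] BurnsideMod R G₁ G₂ →ₗ[R] BurnsideMod R G₁ G₃) :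
    Prop :=
  ∀ (a : GPair G₂ G₃) (b : GPair G₁ G₂) (T : Finset G₂), IsTransversal a b T →
    c (gdelta a) (gdelta b) = ∑ x ∈ T, gdelta (dcfPair a b x)

/-- A fusion system `F` over a finite `p`-group `S`.  A morphism `P → Q` is recorded as a
homomorphism `↥P →* S` whose image is contained in `Q`. -/
structure FusionSystem (S : Type*) [Group S] where
  Hom : (P : Subgroup S) → Set (↥P →* S)
  inj : ∀ (P : Subgroup S) (φ : ↥P →* S), φ ∈ Hom P → Function.Injective φ
  conj_mem : ∀ (P : Subgroup S) (g : S), (MulAut.conj g).toMonoidHom.comp P.subtype ∈ Hom P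
  comp_mem : ∀ (P Q : Subgroup S) (φ : ↥P →* S) (χ : ↥Q →* S), φ ∈ Hom P → χ ∈ Hom Q →
    ∀ h : ∀ x, φ x ∈ Q, χ.comp (φ.codRestrict Q h) ∈ Hom P
  inv_mem : ∀ (P Q : Subgroup S) (e : ↥P ≃* ↥Q), Q.subtype.comp e.toMonoidHom ∈ Hom P →
    P.subtype.comp e.symm.toMonoidHom ∈ Hom Q

/-- The pair `(Q,ρ) = b` is `(F₁,F₂)`-subconjugate to `(P,ψ) = a`: there are
`φ₁ ∈ Hom_{F₁}(Q,P)` and `φ₂ ∈ Hom_{F₂}(ρ(Q), ψ(P))` with `ψ ∘ φ₁ = φ₂ ∘ ρ`. -/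
def GPairSubconj {S₁ S₂ : Type*} [Group S₁] [Group S₂]
    (F₁ : FusionSystem S₁) (F₂ : FusionSystem S₂) (b a : GPair S₁ S₂) : Prop :=
  ∃ φ₁ ∈ F₁.Hom b.H, ∃ h₁ : ∀ x, φ₁ x ∈ a.H,
    ∃ φ₂ ∈ F₂.Hom b.ψ.range, (∀ y, φ₂ y ∈ a.ψ.range) ∧
      ∀ x : ↥b.H, φ₂ ⟨b.ψ x, MonoidHom.mem_range.mpr ⟨x, rfl⟩⟩ = a.ψ ⟨φ₁ x, h₁ x⟩

/-- The `ℤ_p`-submodule `A_{⪯[P,ψ]}` of `A(S₁,S₂)^∧_p` spanned by the basis elements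
`[Q,ρ]` that are `(F₁,F₂)`-subconjugate to `[P,ψ] = a₀`. -/
def SubconjMod (p : ℕ) [Fact p.Prime] {S₁ S₂ : Type*} [Group S₁] [Group S₂]
    (F₁ : FusionSystem S₁) (F₂ : FusionSystem S₂) (a₀ : GPair S₁ S₂) :
    Set (BurnsideMod ℤ_[p] S₁ S₂) :=
  {c | ∀ q, c q ≠ 0 → ∃ b : GPair S₁ S₂, Quot.mk _ b = q ∧ GPairSubconj F₁ F₂ b a₀}

/-- The `ℤ_p`-submodule spanned by the basis elements strictly `(F₁,F₂)`-subconjugate to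
`[P,ψ] = a₀`. -/
def StrictSubconjMod (p : ℕ) [Fact p.Prime] {S₁ S₂ : Type*} [Group S₁] [Group S₂]
    (F₁ : FusionSystem S₁) (F₂ : FusionSystem S₂) (a₀ : GPair S₁ S₂) :
    Set (BurnsideMod ℤ_[p] S₁ S₂) :=
  {c | ∀ q, c q ≠ 0 → ∃ b : GPair S₁ S₂, Quot.mk _ b = q ∧
    GPairSubconj F₁ F₂ b a₀ ∧ ¬ GPairSubconj F₁ F₂ a₀ b}

/-- The subring `A_F(S,S)^∧_p` spanned by the basis elements `[T,φ]` with
`φ ∈ Hom_F(T,S)`. -/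
def RFmod (p : ℕ) [Fact p.Prime] {S : Type*} [Group S] (F : FusionSystem S) :
    Set (BurnsideMod ℤ_[p] S S) :=
  {c | ∀ q, c q ≠ 0 → ∃ a : GPair S S, Quot.mk _ a = q ∧ a.ψ ∈ F.Hom a.H}

section Aux

instance [Finite G₁] [Finite G₂] : Finite (GPair G₁ G₂) := by
  have h1 : Finite (Subgroup G₁) := inferInstance
  have h2 : ∀ H : Subgroup G₁, Finite (↥H →* G₂) := fun H =>
    Finite.of_injective (fun f => (f : ↥H → G₂)) DFunLike.coe_injective
  exact Finite.of_injective (fun a : GPair G₁ G₂ => (⟨a.H, a.ψ⟩ : Σ H : Subgroup G₁, (↥H →* G₂)))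
    (by rintro ⟨H, ψ⟩ ⟨H', ψ'⟩ h; cases h; rfl)

instance [Finite G₁] [Finite G₂] : Finite (Quot (gpairConj (G₁ := G₁) (G₂ := G₂))) :=
  Finite.of_surjective (Quot.mk _) (fun q => Quot.exists_rep q)

noncomputable instance [Finite G₁] [Finite G₂] :
    Fintype (Quot (gpairConj (G₁ := G₁) (G₂ := G₂))) := Fintype.ofFinite _

/-- A chosen representative of a conjugacy class. -/
noncomputable def qrep (q : Quot (gpairConj (G₁ := G₁) (G₂ := G₂))) : GPair G₁ G₂ :=
  (Quot.exists_rep q).choose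

lemma qrep_spec (q : Quot (gpairConj (G₁ := G₁) (G₂ := G₂))) : Quot.mk _ (qrep q) = q :=
  (Quot.exists_rep q).choose_spec

lemma gdelta_congr {R : Type*} [Zero R] [One R] {a a' : GPair G₁ G₂}
    (h : Quot.mk gpairConj a = Quot.mk gpairConj a') :
    (gdelta a : BurnsideMod R G₁ G₂) = gdelta a' := by
  unfold gdelta; rw [h]

lemma bm_sum_apply {R : Type*} [Semiring R] {ι : Type*} (s : Finset ι)
    (f : ι → BurnsideMod R G₁ G₂) (q : Quot (gpairConj (G₁ := G₁) (G₂ := G₂))) :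
    (∑ i ∈ s, f i) q = ∑ i ∈ s, f i q := by
  classical
  induction s using Finset.induction_on with
  | empty => rfl
  | @insert x s h ih => rw [Finset.sum_insert h, Finset.sum_insert h, ← ih]; rfl

lemma bm_decomp [Finite G₁] [Finite G₂] {R : Type*} [Semiring R] (f : BurnsideMod R G₁ G₂) :
    f = ∑ q : Quot (gpairConj (G₁ := G₁) (G₂ := G₂)), f q • gdelta (qrep q) := by
  classical
  funext q'
  rw [bm_sum_apply]
  have : ∀ q, (f q • (gdelta (qrep q) : BurnsideMod R G₁ G₂)) q'
      = if q' = q then f q else 0 := by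
    intro q
    have : (f q • (gdelta (qrep q) : BurnsideMod R G₁ G₂)) q'
        = f q * (gdelta (qrep q) : BurnsideMod R G₁ G₂) q' := rfl
    rw [this]
    unfold gdelta
    rw [qrep_spec]
    split <;> simp
  simp_rw [this]
  exact ((Finset.sum_ite_eq Finset.univ q' (fun q => (f q : R))).trans (if_pos (Finset.mem_univ _))).symm

lemma exists_transversal [Finite G₂] (a : GPair G₂ G₃) (b : GPair G₁ G₂) :
    ∃ T : Finset G₂, IsTransversal a b T := by
  classical
  have : Fintype G₂ := Fintype.ofFinite G₂
  let s : Setoid G₂ :=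
    ⟨fun x y => ∃ k ∈ a.H, ∃ v ∈ b.ψ.range, y = k * x * v, by
      constructor
      · intro x; exact ⟨1, one_mem _, 1, one_mem _, by group⟩
      · rintro x y ⟨k, hk, v, hv, rfl⟩
        exact ⟨k⁻¹, inv_mem hk, v⁻¹, inv_mem hv, by group⟩
      · rintro x y z ⟨k, hk, v, hv, rfl⟩ ⟨k', hk', v', hv', rfl⟩
        exact ⟨k' * k, mul_mem hk' hk, v * v', mul_mem hv hv', by group⟩⟩
  have : Fintype (Quotient s) := Fintype.ofFinite _
  refine ⟨Finset.univ.image (fun c : Quotient s => c.out), fun y => ?_⟩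
  refine ⟨(Quotient.mk s y).out, ⟨Finset.mem_image_of_mem _ (Finset.mem_univ _), ?_⟩, ?_⟩
  · have h : s.r (Quotient.mk s y).out y := by
      have := Quotient.mk_out (s := s) y
      exact Quotient.exact ((Quotient.out_eq (Quotient.mk s y)))
    exact h
  · rintro x' ⟨hx'T, hx'⟩
    obtain ⟨c, -, rfl⟩ := Finset.mem_image.mp hx'T
    have : Quotient.mk s c.out = Quotient.mk s y := Quotient.sound hx'
    rw [Quotient.out_eq] at this
    rw [this]

lemma dcf_support {R : Type*} [CommSemiring R] [Finite G₁] [Finite G₂] [Finite G₃]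
    {c : BurnsideMod R G₂ G₃ →ₗ[R] BurnsideMod R G₁ G₂ →ₗ[R] BurnsideMod R G₁ G₃}
    (hc : DCFLaw c) (Ω : BurnsideMod R G₂ G₃) (Λ : BurnsideMod R G₁ G₂)
    (q : Quot (gpairConj (G₁ := G₁) (G₂ := G₃))) (hq : c Ω Λ q ≠ 0) :
    ∃ q₁ q₂, Ω q₁ ≠ 0 ∧ Λ q₂ ≠ 0 ∧
      ∀ (a : GPair G₂ G₃) (b : GPair G₁ G₂), Quot.mk _ a = q₁ → Quot.mk _ b = q₂ →
        ∃ x : G₂, Quot.mk gpairConj (dcfPair a b x) = q := by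
  classical
  have hΩ := bm_decomp Ω
  have hΛ := bm_decomp Λ
  have key : c Ω Λ = ∑ q₁ : Quot (gpairConj (G₁ := G₂) (G₂ := G₃)),
      ∑ q₂ : Quot (gpairConj (G₁ := G₁) (G₂ := G₂)),
        (Ω q₁ * Λ q₂) • c (gdelta (qrep q₁)) (gdelta (qrep q₂)) := by
    conv_lhs => rw [hΩ, hΛ]
    simp only [map_sum, map_smul, LinearMap.sum_apply, LinearMap.smul_apply,
      Finset.smul_sum, smul_smul]
    rw [Finset.sum_comm]
    exact Finset.sum_congr rfl fun _ _ => Finset.sum_congr rfl fun _ _ => by rw [mul_comm]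
  rw [key] at hq
  have hq2 := hq
  rw [bm_sum_apply] at hq2
  obtain ⟨q₁, -, h1⟩ := Finset.exists_ne_zero_of_sum_ne_zero hq2
  rw [bm_sum_apply] at h1
  obtain ⟨q₂, -, h2⟩ := Finset.exists_ne_zero_of_sum_ne_zero h1
  have h3 : ((Ω q₁ * Λ q₂) • c (gdelta (qrep q₁)) (gdelta (qrep q₂))) q
      = (Ω q₁ * Λ q₂) * c (gdelta (qrep q₁)) (gdelta (qrep q₂)) q := rfl
  rw [h3] at h2
  have hΩ1 : Ω q₁ ≠ 0 := fun h => h2 (by rw [h, zero_mul, zero_mul])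
  have hΛ2 : Λ q₂ ≠ 0 := fun h => h2 (by rw [h, mul_zero, zero_mul])
  have hcval : c (gdelta (qrep q₁)) (gdelta (qrep q₂)) q ≠ 0 :=
    fun h => h2 (by rw [h, mul_zero])
  refine ⟨q₁, q₂, hΩ1, hΛ2, fun a b ha hb => ?_⟩
  have hga : (gdelta (qrep q₁) : BurnsideMod R G₂ G₃) = gdelta a :=
    gdelta_congr (by rw [qrep_spec, ha])
  have hgb : (gdelta (qrep q₂) : BurnsideMod R G₁ G₂) = gdelta b :=
    gdelta_congr (by rw [qrep_spec, hb])
  rw [hga, hgb] at hcval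
  obtain ⟨T, hT⟩ := exists_transversal a b
  rw [hc a b T hT, bm_sum_apply] at hcval
  obtain ⟨x, -, hx⟩ := Finset.exists_ne_zero_of_sum_ne_zero hcval
  refine ⟨x, ?_⟩
  by_contra hne
  exact hx (by unfold gdelta; rw [if_neg (fun h => hne h.symm)])

end Aux
section Fusion

variable {S : Type*} [Group S]

lemma FusionSystem.subtype_mem (F : FusionSystem S) (P : Subgroup S) :
    P.subtype ∈ F.Hom P := by
  have h := F.conj_mem P 1
  have he : (MulAut.conj (1 : S)).toMonoidHom.comp P.subtype = P.subtype := by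
    ext x; simp
  rwa [he] at h

lemma FusionSystem.restrict_mem (F : FusionSystem S) {P P' : Subgroup S}
    (hle : P ≤ P') {φ : ↥P' →* S} (hφ : φ ∈ F.Hom P') :
    φ.comp (Subgroup.inclusion hle) ∈ F.Hom P := by
  have h : ∀ x : ↥P, P.subtype x ∈ P' := fun x => hle x.2
  have hm := F.comp_mem P P' P.subtype φ (F.subtype_mem P) hφ h
  have he : φ.comp (P.subtype.codRestrict P' h) = φ.comp (Subgroup.inclusion hle) := by
    ext x; rfl
  rwa [he] at hm

lemma FusionSystem.conj_comp_mem (F : FusionSystem S) {P : Subgroup S}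
    {φ : ↥P →* S} (hφ : φ ∈ F.Hom P) (g : S) :
    (MulAut.conj g).toMonoidHom.comp φ ∈ F.Hom P := by
  have h : ∀ x, φ x ∈ (⊤ : Subgroup S) := fun x => trivial
  have hm := F.comp_mem P ⊤ φ ((MulAut.conj g).toMonoidHom.comp (⊤ : Subgroup S).subtype)
    hφ (F.conj_mem ⊤ g) h
  have he : ((MulAut.conj g).toMonoidHom.comp (⊤ : Subgroup S).subtype).comp
      (φ.codRestrict ⊤ h) = (MulAut.conj g).toMonoidHom.comp φ := by
    ext x; rfl
  rwa [he] at hm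

/-- The inverse of an injective fusion morphism, defined on its range. -/
lemma FusionSystem.inv_range_mem (F : FusionSystem S) {P : Subgroup S}
    {φ : ↥P →* S} (hφ : φ ∈ F.Hom P) :
    P.subtype.comp (MonoidHom.ofInjective (F.inj P φ hφ)).symm.toMonoidHom
      ∈ F.Hom φ.range := by
  apply F.inv_mem P φ.range (MonoidHom.ofInjective (F.inj P φ hφ))
  have he : φ.range.subtype.comp (MonoidHom.ofInjective (F.inj P φ hφ)).toMonoidHom = φ := by
    ext x
    exact MonoidHom.ofInjective_apply (F.inj P φ hφ)
  rwa [he]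

end Fusion

section Subconj

variable {S₁ S₂ : Type*} [Group S₁] [Group S₂] {F₁ : FusionSystem S₁} {F₂ : FusionSystem S₂}

lemma GPairSubconj.trans {b a c : GPair S₁ S₂}
    (hba : GPairSubconj F₁ F₂ b a) (hac : GPairSubconj F₁ F₂ a c) :
    GPairSubconj F₁ F₂ b c := by
  obtain ⟨φ₁, hφ₁, h₁, φ₂, hφ₂, h₂, hcomp⟩ := hba
  obtain ⟨χ₁, hχ₁, k₁, χ₂, hχ₂, k₂, kcomp⟩ := hac
  refine ⟨χ₁.comp (φ₁.codRestrict a.H h₁), F₁.comp_mem _ _ _ _ hφ₁ hχ₁ h₁,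
    fun x => k₁ _, χ₂.comp (φ₂.codRestrict a.ψ.range h₂),
    F₂.comp_mem _ _ _ _ hφ₂ hχ₂ h₂, fun y => k₂ _, fun x => ?_⟩
  simp only [MonoidHom.comp_apply, MonoidHom.codRestrict_apply]
  have e1 : (⟨φ₂ ⟨b.ψ x, MonoidHom.mem_range.mpr ⟨x, rfl⟩⟩,
      h₂ ⟨b.ψ x, MonoidHom.mem_range.mpr ⟨x, rfl⟩⟩⟩ : ↥a.ψ.range)
      = ⟨a.ψ ⟨φ₁ x, h₁ x⟩, MonoidHom.mem_range.mpr ⟨⟨φ₁ x, h₁ x⟩, rfl⟩⟩ :=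
    Subtype.ext (hcomp x)
  rw [e1, kcomp ⟨φ₁ x, h₁ x⟩]

lemma dcfPair_subconj_left {a : GPair S₂ S₂} (ha : a.ψ ∈ F₂.Hom a.H)
    (b : GPair S₁ S₂) (x : S₂) :
    GPairSubconj F₁ F₂ (dcfPair a b x) b := by
  set b' := dcfPair a b x with hb'
  have hHle : b'.H ≤ b.H := dcfSub_le a b x
  -- φ₁ : inclusion
  refine ⟨b'.H.subtype, F₁.subtype_mem _, fun u => hHle u.2, ?_⟩
  -- the inverse of a.ψ on its range
  set e := MonoidHom.ofInjective (F₂.inj a.H a.ψ ha)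
  set χ : ↥a.ψ.range →* S₂ := a.H.subtype.comp e.symm.toMonoidHom with hχ
  have hχmem : χ ∈ F₂.Hom a.ψ.range := F₂.inv_range_mem ha
  have hr : b'.ψ.range ≤ a.ψ.range := by
    rintro y ⟨u, rfl⟩
    exact MonoidHom.mem_range.mpr ⟨_, rfl⟩
  set φ₂ : ↥b'.ψ.range →* S₂ :=
    (MulAut.conj x⁻¹).toMonoidHom.comp (χ.comp (Subgroup.inclusion hr)) with hφ₂
  have hφ₂mem : φ₂ ∈ F₂.Hom b'.ψ.range :=
    F₂.conj_comp_mem (F₂.restrict_mem hr hχmem) x⁻¹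
  -- key computation
  have key : ∀ (u : ↥b'.H) (hm : b'.ψ u ∈ b'.ψ.range), φ₂ ⟨b'.ψ u, hm⟩
      = b.ψ (Subgroup.inclusion hHle u) := by
    intro u hm
    have hw : (Subgroup.inclusion hr ⟨b'.ψ u, hm⟩ : ↥a.ψ.range)
        = e ⟨(MulAut.conj x) (b.ψ (Subgroup.inclusion hHle u)), dcf_mem a b x u⟩ := by
      apply Subtype.ext
      have h2 : ↑(e ⟨(MulAut.conj x) (b.ψ (Subgroup.inclusion hHle u)), dcf_mem a b x u⟩)
          = a.ψ ⟨(MulAut.conj x) (b.ψ (Subgroup.inclusion hHle u)), dcf_mem a b x u⟩ :=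
        MonoidHom.ofInjective_apply _
      rw [h2]
      rfl
    simp only [hφ₂, MonoidHom.comp_apply, hw, hχ, MulEquiv.toMonoidHom_eq_coe,
      MonoidHom.coe_coe, MulEquiv.symm_apply_apply]
    simp [MulAut.conj_apply, mul_assoc]
  refine ⟨φ₂, hφ₂mem, ?_, fun u => ?_⟩
  · rintro ⟨y, u, rfl⟩
    show φ₂ ⟨b'.ψ u, MonoidHom.mem_range.mpr ⟨u, rfl⟩⟩ ∈ b.ψ.range
    rw [key u _]
    exact MonoidHom.mem_range.mpr ⟨_, rfl⟩
  · rw [key u _]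
    rfl

lemma dcfPair_subconj_right {b : GPair S₁ S₁} (hb : b.ψ ∈ F₁.Hom b.H)
    (a : GPair S₁ S₂) (x : S₁) :
    GPairSubconj F₁ F₂ (dcfPair a b x) a := by
  set b' := dcfPair a b x with hb'
  set φ₁ : ↥b'.H →* S₁ :=
    (MulAut.conj x).toMonoidHom.comp (b.ψ.comp (Subgroup.inclusion (dcfSub_le a b x))) with hφ₁
  have hφ₁mem : φ₁ ∈ F₁.Hom b'.H :=
    F₁.conj_comp_mem (F₁.restrict_mem (dcfSub_le a b x) hb) x
  have h₁ : ∀ u, φ₁ u ∈ a.H := fun u => dcf_mem a b x u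
  have hr : ∀ y : ↥b'.ψ.range, b'.ψ.range.subtype y ∈ a.ψ.range := by
    rintro ⟨y, u, rfl⟩
    exact MonoidHom.mem_range.mpr ⟨⟨φ₁ u, h₁ u⟩, rfl⟩
  exact ⟨φ₁, hφ₁mem, h₁, b'.ψ.range.subtype, F₂.subtype_mem _, hr, fun u => rfl⟩

end Subconj
/-- For fusion systems `F₁, F₂` over finite `p`-groups `S₁, S₂` and an `(S₁,S₂)`-pair
`(P,ψ)`, the submodule `A_{⪯[P,ψ]} ⊆ A(S₁,S₂)^∧_p` is closed under left multiplication
by `A_{F₂}(S₂,S₂)^∧_p` and under right multiplication by `A_{F₁}(S₁,S₁)^∧_p`, and the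
same holds for the strictly subconjugate submodule.  Here `compL` and `compR` are the
composition pairings of Burnside modules, characterized by the double coset formula. -/
theorem stmt16 (p : ℕ) [Fact p.Prime] {S₁ S₂ : Type*} [Group S₁] [Group S₂]
    [Fintype S₁] [Fintype S₂] (h₁ : IsPGroup p S₁) (h₂ : IsPGroup p S₂)
    (F₁ : FusionSystem S₁) (F₂ : FusionSystem S₂)
    (P : Subgroup S₁) (ψ : ↥P →* S₂)
    (compL : BurnsideMod ℤ_[p] S₂ S₂ →ₗ[ℤ_[p]] BurnsideMod ℤ_[p] S₁ S₂ →ₗ[ℤ_[p]]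
      BurnsideMod ℤ_[p] S₁ S₂)
    (hL : DCFLaw compL)
    (compR : BurnsideMod ℤ_[p] S₁ S₂ →ₗ[ℤ_[p]] BurnsideMod ℤ_[p] S₁ S₁ →ₗ[ℤ_[p]]
      BurnsideMod ℤ_[p] S₁ S₂)
    (hR : DCFLaw compR) :
    (∀ Ω Λ, Ω ∈ RFmod p F₂ → Λ ∈ SubconjMod p F₁ F₂ ⟨P, ψ⟩ →
        compL Ω Λ ∈ SubconjMod p F₁ F₂ ⟨P, ψ⟩) ∧
    (∀ Ω Λ, Ω ∈ RFmod p F₂ → Λ ∈ StrictSubconjMod p F₁ F₂ ⟨P, ψ⟩ →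
        compL Ω Λ ∈ StrictSubconjMod p F₁ F₂ ⟨P, ψ⟩) ∧
    (∀ Λ Ω, Λ ∈ SubconjMod p F₁ F₂ ⟨P, ψ⟩ → Ω ∈ RFmod p F₁ →
        compR Λ Ω ∈ SubconjMod p F₁ F₂ ⟨P, ψ⟩) ∧
    (∀ Λ Ω, Λ ∈ StrictSubconjMod p F₁ F₂ ⟨P, ψ⟩ → Ω ∈ RFmod p F₁ →
        compR Λ Ω ∈ StrictSubconjMod p F₁ F₂ ⟨P, ψ⟩) := by
  refine ⟨?_, ?_, ?_, ?_⟩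
  · intro Ω Λ hΩ hΛ q hq
    obtain ⟨q₁, q₂, hq₁, hq₂, hmain⟩ := dcf_support hL Ω Λ q hq
    obtain ⟨a, ha, haF⟩ := hΩ q₁ hq₁
    obtain ⟨b, hb, hbsub⟩ := hΛ q₂ hq₂
    obtain ⟨x, hx⟩ := hmain a b ha hb
    exact ⟨dcfPair a b x, hx, (dcfPair_subconj_left haF b x).trans hbsub⟩
  · intro Ω Λ hΩ hΛ q hq
    obtain ⟨q₁, q₂, hq₁, hq₂, hmain⟩ := dcf_support hL Ω Λ q hq
    obtain ⟨a, ha, haF⟩ := hΩ q₁ hq₁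
    obtain ⟨b, hb, hbsub, hbns⟩ := hΛ q₂ hq₂
    obtain ⟨x, hx⟩ := hmain a b ha hb
    exact ⟨dcfPair a b x, hx, (dcfPair_subconj_left haF b x).trans hbsub,
      fun h => hbns (h.trans (dcfPair_subconj_left haF b x))⟩
  · intro Λ Ω hΛ hΩ q hq
    obtain ⟨q₁, q₂, hq₁, hq₂, hmain⟩ := dcf_support hR Λ Ω q hq
    obtain ⟨a, ha, hasub⟩ := hΛ q₁ hq₁
    obtain ⟨b, hb, hbF⟩ := hΩ q₂ hq₂
    obtain ⟨x, hx⟩ := hmain a b ha hb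
    exact ⟨dcfPair a b x, hx, (dcfPair_subconj_right hbF a x).trans hasub⟩
  · intro Λ Ω hΛ hΩ q hq
    obtain ⟨q₁, q₂, hq₁, hq₂, hmain⟩ := dcf_support hR Λ Ω q hq
    obtain ⟨a, ha, hasub, hans⟩ := hΛ q₁ hq₁
    obtain ⟨b, hb, hbF⟩ := hΩ q₂ hq₂
    obtain ⟨x, hx⟩ := hmain a b ha hb
    exact ⟨dcfPair a b x, hx, (dcfPair_subconj_right hbF a x).trans hasub,
      fun h => hans (h.trans (dcfPair_subconj_right hbF a x))⟩
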